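/- arXiv:2503.01110 — 2 statements merged into one kernel-verified Lean document; each statement's English description precedes it below -/
import Mathlib

section
/- Let f : ℝ^n → ℝ ∪ {+∞} be a polyhedral M-convex function with bounded nonempty effective domain. Let y ∈ dom f with φ_ℝ(y) < 0, let i ∈ N satisfy f'_ℝ(y; i, j) > φ_ℝ(y) for every j ∈ N ∖ {i}, and let h, k ∈ N be distinct elements with f'_ℝ(y; h, k) = φ_ℝ(y). Then for every real λ with 0 < λ and f(y + λ(χ_h − χ_k)) − f(y) = λ φ_ℝ(y), the vector ŷ = y + λ(χ_h − χ_k) satisfies f'_ℝ(ŷ; i, j) > φ_ℝ(y) for every j ∈ N ∖ {i}. -/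
/-!
Write `φ = φ_ℝ(y)` and pick `δ > 0` with `f'_ℝ(y; i, j) ≥ φ + δ` for all `j ≠ i`. Then `f` lies
above the minorant `g(z) = f(y) + φ ‖z - y‖₁ / 2 + δ (z_i - y_i)⁺`: at a minimizer `w ≠ y` of
`f - g` over the compact domain, the exchange axiom for the pair `(w, y)` moves `w` towards `y`
without increasing `f - g` (a small `ℓ¹` penalty makes this decrease strict). Since
`f(ŷ) = g(ŷ)`, the slopes of `f` at `ŷ` dominate those of `g`, and the triangle inequality for
`‖ŷ + ε(χ_i - χ_j) - y‖₁` bounds the slope of `g` in direction `χ_i - χ_j` below by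
`min (φ + δ) 0 > φ`. Convexity makes the difference quotients monotone, so the bound passes to the
infimum defining `f'_ℝ(ŷ; i, j)`.
-/

noncomputable section

open scoped BigOperators

/-- The `i`-th unit vector in `ℝ^n`. -/
def chiR {n : ℕ} (i : Fin n) : Fin n → ℝ := fun k => if k = i then 1 else 0

/-- The function never takes the value `-∞`, i.e. its codomain is `ℝ ∪ {+∞}`. -/
def NoBotR {n : ℕ} (f : (Fin n → ℝ) → EReal) : Prop := ∀ x, f x ≠ ⊥

/-- `f` is polyhedral convex: its epigraph is a nonempty intersection of finitely many
closed affine halfspaces. -/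
def PolyhedralConvex {n : ℕ} (f : (Fin n → ℝ) → EReal) : Prop :=
  (∃ (x : Fin n → ℝ) (t : ℝ), f x ≤ (t : EReal)) ∧
  ∃ (m : ℕ) (a : Fin m → Fin n → ℝ) (b c : Fin m → ℝ),
    ∀ (x : Fin n → ℝ) (t : ℝ),
      f x ≤ (t : EReal) ↔ ∀ k : Fin m, (∑ i, a k i * x i) + b k * t ≤ c k

/-- The exchange axiom (M-EXC[ℝ]). -/
def MExcR {n : ℕ} (f : (Fin n → ℝ) → EReal) : Prop :=
  ∀ x y : Fin n → ℝ, f x ≠ ⊤ → f y ≠ ⊤ →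
    ∀ i : Fin n, y i < x i →
      ∃ j : Fin n, x j < y j ∧ ∃ ε₀ : ℝ, 0 < ε₀ ∧
        ∀ ε : ℝ, 0 ≤ ε → ε ≤ ε₀ →
          f (x - ε • (chiR i - chiR j)) + f (y + ε • (chiR i - chiR j)) ≤ f x + f y

/-- Polyhedral M-convex function. -/
def PolyMConvex {n : ℕ} (f : (Fin n → ℝ) → EReal) : Prop :=
  PolyhedralConvex f ∧ MExcR f

/-- The directional derivative `f'_ℝ(x; i, j) = lim_{α ↓ 0} (f(x + α(χ_i - χ_j)) - f(x))/α`.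
For a (polyhedral) convex function the difference quotient is nondecreasing in `α`, so the
limit equals the infimum of the difference quotients over `α > 0`. -/
def slopeR {n : ℕ} (f : (Fin n → ℝ) → EReal) (x : Fin n → ℝ) (i j : Fin n) : EReal :=
  ⨅ α : {a : ℝ // 0 < a}, (f (x + α.1 • (chiR i - chiR j)) - f x) * (((α.1)⁻¹ : ℝ) : EReal)

/-- `φ_ℝ(x) = min_{i, j ∈ N} f'_ℝ(x; i, j)`. -/
def phiRp {n : ℕ} (f : (Fin n → ℝ) → EReal) (x : Fin n → ℝ) : EReal :=
  ⨅ i : Fin n, ⨅ j : Fin n, slopeR f x i j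

/-- Bounded effective domain. -/
def BddDomR {n : ℕ} (f : (Fin n → ℝ) → EReal) : Prop :=
  ∃ C : ℝ, ∀ x : Fin n → ℝ, f x ≠ ⊤ → ∀ i, |x i| ≤ C

open Finset

section L1

variable {n : ℕ}

def l1norm (x : Fin n → ℝ) : ℝ := ∑ q, |x q|

@[simp]
lemma l1norm_zero : l1norm (0 : Fin n → ℝ) = 0 := by
  simp [l1norm]

@[fun_prop]
lemma continuous_l1norm : Continuous (l1norm : (Fin n → ℝ) → ℝ) := by
  unfold l1norm; fun_prop

lemma l1norm_add_le (x z : Fin n → ℝ) : l1norm (x + z) ≤ l1norm x + l1norm z := by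
  rw [l1norm, l1norm, l1norm, ← sum_add_distrib]
  exact sum_le_sum fun q _ => abs_add_le _ _

lemma l1norm_smul_chiR_sub_chiR_le (c : ℝ) (p q : Fin n) :
    l1norm (c • (chiR p - chiR q)) ≤ 2 * |c| :=
  calc l1norm (c • (chiR p - chiR q)) ≤ ∑ t, |c| * (chiR p t + chiR q t) := by
        refine sum_le_sum fun t _ => ?_
        rw [Pi.smul_apply, smul_eq_mul, abs_mul]
        gcongr
        simp only [chiR, Pi.sub_apply]
        split_ifs <;> norm_num
    _ = 2 * |c| := by simp [chiR, ← mul_sum, sum_add_distrib]; ring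

lemma l1norm_sub_smul_chiR_sub_chiR {z : Fin n → ℝ} {p j : Fin n} {ε : ℝ} (hpj : p ≠ j)
    (hε : 0 ≤ ε) (hp : ε ≤ z p) (hj : ε ≤ -z j) :
    l1norm (z - ε • (chiR p - chiR j)) = l1norm z - 2 * ε := by
  have key : ∀ t, |(z - ε • (chiR p - chiR j)) t| = |z t| - ε * (chiR p t + chiR j t) := by
    intro t
    by_cases htp : t = p
    · subst htp
      simp [chiR, hpj, abs_of_nonneg, hε.trans hp, abs_of_nonneg (sub_nonneg.2 hp)]
    by_cases htj : t = j
    · subst htj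
      have : z t ≤ 0 := by linarith
      simp [chiR, Ne.symm hpj, abs_of_nonpos this, abs_of_nonpos (by linarith : z t + ε ≤ 0)]
      ring
    · simp [chiR, htp, htj]
  simp only [l1norm, key, sum_sub_distrib, ← mul_sum, sum_add_distrib]
  simp [chiR]
  ring

end L1

section Convexity

variable {n : ℕ} {f : (Fin n → ℝ) → EReal}

lemma PolyhedralConvex.convex_epigraph (hf : PolyhedralConvex f) :
    Convex ℝ {p : (Fin n → ℝ) × ℝ | f p.1 ≤ p.2} := by
  obtain ⟨-, m, a, b, c, hrep⟩ := hf
  have : {p : (Fin n → ℝ) × ℝ | f p.1 ≤ p.2}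
      = ⋂ k, {p | ∑ i, a k i * p.1 i + b k * p.2 ≤ c k} := by
    ext p; simp [hrep]
  rw [this]
  refine convex_iInter fun k => convex_halfSpace_le ⟨fun p q => ?_, fun r p => ?_⟩ _
  · simp [mul_add, sum_add_distrib]; ring
  · simp [mul_sum, smul_eq_mul, mul_add, mul_left_comm]

lemma PolyhedralConvex.lowerSemicontinuous (hf : PolyhedralConvex f) : LowerSemicontinuous f := by
  obtain ⟨-, m, a, b, c, hrep⟩ := hf
  have hsub : ∀ t : ℝ, IsClosed {x | f x ≤ t} := fun t => by
    simp_rw [hrep, Set.ofPred_forall]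
    exact isClosed_iInter fun k => isClosed_le (by fun_prop) continuous_const
  rw [lowerSemicontinuous_iff_isClosed_preimage]
  intro t
  induction t using EReal.rec with
  | bot =>
    have : f ⁻¹' Set.Iic ⊥ = ⋂ t : ℝ, {x | f x ≤ t} := by
      ext x
      simp only [Set.mem_preimage, Set.mem_Iic, le_bot_iff, Set.mem_iInter, Set.mem_ofPred_eq]
      exact ⟨fun h t => h ▸ bot_le, fun h => (EReal.eq_bot_iff_forall_lt _).2 fun t =>
        (h (t - 1)).trans_lt (by exact_mod_cast sub_one_lt t)⟩
    rw [this]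
    exact isClosed_iInter hsub
  | coe t => exact hsub t
  | top => simp

end Convexity

lemma le_add_mul_of_convex_epigraph {E : Type*} [AddCommGroup E] [Module ℝ E] {f : E → EReal}
    (hc : Convex ℝ {p : E × ℝ | f p.1 ≤ p.2}) {x d : E} {u s α ε : ℝ} (hx : f x = u)
    (hα : 0 < α) (hxα : f (x + α • d) ≤ ((u + α * s : ℝ) : EReal)) (hε : 0 ≤ ε) (hεα : ε ≤ α) :
    f (x + ε • d) ≤ ((u + ε * s : ℝ) : EReal) := by
  have hmem := hc (x := (x + α • d, u + α * s)) hxα (y := (x, u)) hx.le (div_nonneg hε hα.le)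
    (sub_nonneg.2 ((div_le_one hα).2 hεα)) (add_sub_cancel _ _)
  have hpt : (ε / α) • (x + α • d) + (1 - ε / α) • x = x + ε • d := by
    rw [smul_add, smul_smul, div_mul_cancel₀ _ hα.ne']; module
  have hval : ε / α * (u + α * s) + (1 - ε / α) * u = u + ε * s := by
    field_simp; ring
  rw [Set.mem_ofPred_eq, Prod.fst_add, Prod.snd_add, Prod.smul_fst, Prod.smul_snd,
    Prod.smul_fst, Prod.smul_snd, hpt, smul_eq_mul, smul_eq_mul, hval] at hmem
  exact hmem

section Slope

variable {n : ℕ} {f : (Fin n → ℝ) → EReal} {x : Fin n → ℝ} {i j : Fin n} {u : ℝ}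

lemma coe_add_mul_le_of_le_slopeR {r α : ℝ} (hx : f x = u) (hr : (r : EReal) ≤ slopeR f x i j)
    (hα : 0 < α) : ((u + α * r : ℝ) : EReal) ≤ f (x + α • (chiR i - chiR j)) := by
  have hq := hr.trans (iInf_le _ ⟨α, hα⟩)
  dsimp only at hq
  rw [hx] at hq
  generalize f (x + α • (chiR i - chiR j)) = t at hq ⊢
  induction t using EReal.rec with
  | bot => simp [EReal.bot_mul_of_pos (EReal.coe_pos.2 (inv_pos.2 hα))] at hq
  | coe v =>
    rw [← EReal.coe_sub, ← EReal.coe_mul, EReal.coe_le_coe_iff, le_mul_inv_iff₀ hα] at hq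
    exact_mod_cast (by linarith : u + α * r ≤ v)
  | top => exact le_top

lemma exists_le_of_slopeR_lt {r : ℝ} (hx : f x = u) (hr : slopeR f x i j < r) :
    ∃ α > 0, f (x + α • (chiR i - chiR j)) ≤ ((u + α * r : ℝ) : EReal) := by
  obtain ⟨⟨α, hα⟩, hq⟩ := iInf_lt_iff.1 hr
  refine ⟨α, hα, ?_⟩
  dsimp only at hq
  rw [hx] at hq
  generalize f (x + α • (chiR i - chiR j)) = t at hq ⊢
  induction t using EReal.rec with
  | bot => exact bot_le
  | coe v =>
    rw [← EReal.coe_sub, ← EReal.coe_mul, EReal.coe_lt_coe_iff, mul_inv_lt_iff₀ hα] at hq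
    exact_mod_cast (by linarith : v ≤ u + α * r)
  | top => simp [EReal.top_mul_of_pos (EReal.coe_pos.2 (inv_pos.2 hα))] at hq

lemma coe_le_slopeR_of_forall_le (hc : Convex ℝ {p : (Fin n → ℝ) × ℝ | f p.1 ≤ p.2})
    (hx : f x = u) {m β : ℝ} (hβ : 0 < β)
    (h : ∀ ε, 0 < ε → ε ≤ β → ((u + ε * m : ℝ) : EReal) ≤ f (x + ε • (chiR i - chiR j))) :
    (m : EReal) ≤ slopeR f x i j := by
  by_contra! hlt
  obtain ⟨r, hr, hrm⟩ := EReal.lt_iff_exists_real_btwn.1 hlt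
  obtain ⟨α, hα, hfα⟩ := exists_le_of_slopeR_lt hx hr
  have hε : 0 < min α β := lt_min hα hβ
  have := (h _ hε (min_le_right _ _)).trans
    (le_add_mul_of_convex_epigraph hc hx hα hfα hε.le (min_le_left _ _))
  rw [EReal.coe_le_coe_iff] at this
  have : m ≤ r := le_of_mul_le_mul_left (by linarith) hε
  exact absurd (EReal.coe_lt_coe_iff.1 hrm) this.not_gt

end Slope

lemma LowerSemicontinuous.exists_forall_sub_coe_le {n : ℕ} {f : (Fin n → ℝ) → EReal}
    (hf : LowerSemicontinuous f) (hbdd : BddDomR f) {g : (Fin n → ℝ) → ℝ} (hg : Continuous g)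
    {y : Fin n → ℝ} (hy : f y ≠ ⊤) : ∃ w, f w ≠ ⊤ ∧ ∀ z, f w - g w ≤ f z - g z := by
  set H : (Fin n → ℝ) → EReal := fun z => f z - g z
  have hH : LowerSemicontinuous H :=
    hf.add' (continuous_coe_real_ereal.comp hg.neg).lowerSemicontinuous
      fun z => EReal.continuousAt_add (.inr (EReal.coe_ne_bot _)) (.inr (EReal.coe_ne_top _))
  have hdom : ∀ z, H z ≤ H y → f z ≠ ⊤ := fun z hz htop => by
    have : H y < ⊤ := EReal.add_lt_top hy (EReal.coe_ne_top _)
    simp [H, htop] at hz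
    exact this.ne hz
  obtain ⟨C, hC⟩ := hbdd
  have hK : IsCompact (H ⁻¹' Set.Iic (H y)) :=
    (isCompact_univ_pi fun _ => isCompact_Icc (a := -C) (b := C)).of_isClosed_subset
      (hH.isClosed_preimage _) fun z hz q _ => abs_le.1 (hC z (hdom z hz) q)
  obtain ⟨w, hwK, hmin⟩ :=
    (hH.lowerSemicontinuousOn _).exists_isMinOn ⟨y, le_refl (H y)⟩ hK
  refine ⟨w, hdom w hwK, fun z => ?_⟩
  by_cases hz : H z ≤ H y
  · exact hmin hz
  · exact (hmin (le_refl (H y))).trans (not_le.1 hz).le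

lemma MExcR.exists_lt_of_ne {n : ℕ} {f : (Fin n → ℝ) → EReal} (hexc : MExcR f)
    {w y : Fin n → ℝ} (hw : f w ≠ ⊤) (hy : f y ≠ ⊤) (hne : w ≠ y) : ∃ p, y p < w p := by
  by_contra! hle
  obtain ⟨q, hq⟩ : ∃ q, w q < y q := by
    by_contra! hge
    exact hne (funext fun q => le_antisymm (hle q) (hge q))
  obtain ⟨j, hj, -⟩ := hexc y w hy hw q hq
  exact (hle j).not_gt hj

section Minorant

variable {n : ℕ} {i : Fin n} {φ δ : ℝ}

variable (i φ δ) in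
def minorant (x : Fin n → ℝ) : ℝ := φ * l1norm x / 2 + δ * max (x i) 0

variable (i φ δ) in
@[fun_prop]
lemma continuous_minorant : Continuous (minorant i φ δ) := by
  unfold minorant; fun_prop

@[simp]
lemma minorant_zero : minorant i φ δ 0 = 0 := by
  simp [minorant]

lemma minorant_sub_le {x : Fin n → ℝ} {p j : Fin n} {ε : ℝ} (hδ : 0 ≤ δ) (hpj : p ≠ j)
    (hε : 0 ≤ ε) (hp : ε ≤ x p) (hj : ε ≤ -x j) (hpi : p ≠ i → x i ≤ 0) :
    minorant i φ δ x - minorant i φ δ (x - ε • (chiR p - chiR j))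
      ≤ ε * if p = i then φ + δ else φ := by
  unfold minorant
  rw [l1norm_sub_smul_chiR_sub_chiR hpj hε hp hj]
  by_cases hip : p = i
  · subst hip
    have hxp : (x - ε • (chiR p - chiR j)) p = x p - ε := by simp [chiR, hpj]
    rw [if_pos rfl, hxp, max_eq_left (by linarith), max_eq_left (by linarith)]
    linarith
  · rw [if_neg hip, max_eq_right (hpi hip)]
    nlinarith [mul_nonneg hδ (le_max_right ((x - ε • (chiR p - chiR j)) i) 0)]

lemma le_minorant_add_smul {h k j : Fin n} {lam ε : ℝ} (hih : i ≠ h) (hji : j ≠ i) (hε : 0 < ε)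
    (hεlam : ε ≤ lam) (hφ : φ ≤ 0) (hδ : 0 ≤ δ) :
    lam * φ + ε * min (φ + δ) 0
      ≤ minorant i φ δ (lam • (chiR h - chiR k) + ε • (chiR i - chiR j)) := by
  unfold minorant
  have hmin := min_le_left (φ + δ) 0
  by_cases hik : i = k
  · subst hik
    have hL : l1norm (lam • (chiR h - chiR i) + ε • (chiR i - chiR j)) ≤ 2 * lam :=
      calc _ = l1norm ((lam - ε) • (chiR h - chiR i) + ε • (chiR h - chiR j)) := by
            congr 1; module
        _ ≤ 2 * |lam - ε| + 2 * |ε| := (l1norm_add_le _ _).trans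
            (add_le_add (l1norm_smul_chiR_sub_chiR_le _ _ _) (l1norm_smul_chiR_sub_chiR_le _ _ _))
        _ = 2 * lam := by rw [abs_of_nonneg (by linarith), abs_of_pos hε]; ring
    nlinarith [mul_nonneg hδ (le_max_right
      ((lam • (chiR h - chiR i) + ε • (chiR i - chiR j)) i) 0), min_le_right (φ + δ) 0]
  · have hi : (lam • (chiR h - chiR k) + ε • (chiR i - chiR j)) i = ε := by
      simp [chiR, hih, hik, hji.symm]
    have hL : l1norm (lam • (chiR h - chiR k) + ε • (chiR i - chiR j)) ≤ 2 * lam + 2 * ε :=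
      calc _ ≤ 2 * |lam| + 2 * |ε| := (l1norm_add_le _ _).trans
            (add_le_add (l1norm_smul_chiR_sub_chiR_le _ _ _) (l1norm_smul_chiR_sub_chiR_le _ _ _))
        _ = 2 * lam + 2 * ε := by rw [abs_of_pos (hε.trans_le hεlam), abs_of_pos hε]
    rw [hi, max_eq_left hε.le]
    nlinarith

end Minorant

section LowerBound

variable {n : ℕ} {f : (Fin n → ℝ) → EReal} {y : Fin n → ℝ} {i : Fin n} {u φ δ : ℝ}

lemma MExcR.exists_exchange_step (hexc : MExcR f) {w : Fin n → ℝ} {v : ℝ} {p : Fin n}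
    (hfy : f y = u) (hw : f w = v) (hp : y p < w p) :
    ∃ j, w j < y j ∧ ∃ ε > 0, ε ≤ w p - y p ∧ ε ≤ y j - w j ∧ ∀ s : ℝ,
      (s : EReal) ≤ slopeR f y p j → f (w - ε • (chiR p - chiR j)) ≤ ((v - ε * s : ℝ) : EReal) := by
  obtain ⟨j, hj, ε₀, hε₀, hex⟩ := hexc w y (by simp [hw]) (by simp [hfy]) p hp
  set ε := min ε₀ (min (w p - y p) (y j - w j))
  have hε : 0 < ε := lt_min hε₀ (lt_min (by linarith) (by linarith))
  refine ⟨j, hj, ε, hε, (min_le_right _ _).trans (min_le_left _ _),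
    (min_le_right _ _).trans (min_le_right _ _), fun s hs => ?_⟩
  have hsum := (add_le_add le_rfl (coe_add_mul_le_of_le_slopeR hfy hs hε)).trans
    (hex ε hε.le (min_le_left _ _))
  rw [hw, hfy] at hsum
  generalize f (w - ε • (chiR p - chiR j)) = t at hsum ⊢
  induction t using EReal.rec with
  | bot => exact bot_le
  | coe t =>
    rw [← EReal.coe_add, ← EReal.coe_add, EReal.coe_le_coe_iff] at hsum
    exact_mod_cast (by linarith : t ≤ v - ε * s)
  | top => exact absurd hsum (by simp [← EReal.coe_add])

/-- An exchange step from `w` towards `y` strictly decreases `f - minorant + ρ ‖· - y‖₁`: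
it lowers `f` by at least `ε f'(y; p, j)`, the minorant by at most that much, and the penalty
by `2 ρ ε`. -/
lemma exists_sub_lt_of_ne (hexc : MExcR f) (hfy : f y = u)
    (hφ : ∀ p q, (φ : EReal) ≤ slopeR f y p q)
    (hδ : ∀ j, j ≠ i → ((φ + δ : ℝ) : EReal) ≤ slopeR f y i j) (hδ0 : 0 ≤ δ)
    {ρ v : ℝ} (hρ : 0 < ρ) {w : Fin n → ℝ} (hw : f w = v) (hne : w ≠ y) :
    ∃ z, f z - ((minorant i φ δ (z - y) - ρ * l1norm (z - y) : ℝ) : EReal)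
      < f w - ((minorant i φ δ (w - y) - ρ * l1norm (w - y) : ℝ) : EReal) := by
  obtain ⟨p, hp, hpi⟩ : ∃ p, y p < w p ∧ (p ≠ i → w i ≤ y i) := by
    by_cases hi : y i < w i
    · exact ⟨i, hi, fun h => absurd rfl h⟩
    · obtain ⟨p, hp⟩ := hexc.exists_lt_of_ne (by simp [hw]) (by simp [hfy]) hne
      exact ⟨p, hp, fun _ => not_lt.1 hi⟩
  obtain ⟨j, hj, ε, hε, hεp, hεj, hstep⟩ := hexc.exists_exchange_step hfy hw hp
  have hpj : p ≠ j := by rintro rfl; linarith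
  have hs : ((if p = i then φ + δ else φ : ℝ) : EReal) ≤ slopeR f y p j := by
    by_cases hip : p = i
    · subst hip; simpa using hδ j hpj.symm
    · simpa [hip] using hφ p j
  have hεp' : ε ≤ (w - y) p := by simpa using hεp
  have hεj' : ε ≤ -(w - y) j := by simp; linarith
  have hm := minorant_sub_le (φ := φ) hδ0 hpj hε.le hεp' hεj' fun h => by simpa using hpi h
  have hL := l1norm_sub_smul_chiR_sub_chiR hpj hε.le hεp' hεj'
  refine ⟨w - ε • (chiR p - chiR j), (EReal.sub_le_sub (hstep _ hs) le_rfl).trans_lt ?_⟩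
  rw [hw, ← EReal.coe_sub, ← EReal.coe_sub, EReal.coe_lt_coe_iff, sub_right_comm w, hL]
  nlinarith

variable (hf : LowerSemicontinuous f) (hbdd : BddDomR f) (hbot : NoBotR f) (hexc : MExcR f)
  (hfy : f y = u) (hφ : ∀ p q, (φ : EReal) ≤ slopeR f y p q)
  (hδ : ∀ j, j ≠ i → ((φ + δ : ℝ) : EReal) ≤ slopeR f y i j) (hδ0 : 0 ≤ δ)
include hf hbdd hbot hexc hfy hφ hδ hδ0

/-- The minimizer of `f - minorant + ρ ‖· - y‖₁` over the compact domain can only be `y`. -/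
lemma coe_add_minorant_sub_le {ρ : ℝ} (hρ : 0 < ρ) (z : Fin n → ℝ) :
    ((u + minorant i φ δ (z - y) - ρ * l1norm (z - y) : ℝ) : EReal) ≤ f z := by
  obtain ⟨w, hw, hmin⟩ := hf.exists_forall_sub_coe_le hbdd
    (g := fun z => minorant i φ δ (z - y) - ρ * l1norm (z - y)) (by fun_prop) (y := y)
    (by simp [hfy])
  obtain rfl : y = w := by
    by_contra hne
    obtain ⟨z, hz⟩ := exists_sub_lt_of_ne hexc hfy hφ hδ hδ0 hρ
      (EReal.coe_toReal hw (hbot w)).symm (Ne.symm hne)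
    exact (hmin z).not_gt hz
  have := hmin z
  rw [hfy, sub_self, minorant_zero, l1norm_zero, mul_zero, sub_zero, EReal.coe_zero,
    sub_zero] at this
  generalize f z = t at this ⊢
  induction t using EReal.rec with
  | bot => simp at this
  | coe v =>
    rw [← EReal.coe_sub, EReal.coe_le_coe_iff] at this
    exact_mod_cast (by linarith : u + minorant i φ δ (z - y) - ρ * l1norm (z - y) ≤ v)
  | top => exact le_top

lemma coe_add_minorant_le (z : Fin n → ℝ) : ((u + minorant i φ δ (z - y) : ℝ) : EReal) ≤ f z := by
  have hρ := fun ρ (hρ : 0 < ρ) =>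
    coe_add_minorant_sub_le hf hbdd hbot hexc hfy hφ hδ hδ0 hρ z
  generalize f z = t at hρ ⊢
  induction t using EReal.rec with
  | bot => exact absurd (le_bot_iff.1 (hρ 1 one_pos)) (EReal.coe_ne_bot _)
  | coe v =>
    rw [EReal.coe_le_coe_iff]
    refine le_of_forall_pos_le_add fun ε hε => ?_
    have hL : 0 ≤ l1norm (z - y) := sum_nonneg fun q _ => abs_nonneg _
    have hρε := EReal.coe_le_coe_iff.1 (hρ (ε / (l1norm (z - y) + 1)) (by positivity))
    have : ε / (l1norm (z - y) + 1) * l1norm (z - y) ≤ ε := by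
      rw [div_mul_eq_mul_div, div_le_iff₀ (by positivity)]
      nlinarith
    linarith
  | top => exact le_top

end LowerBound

lemma exists_coe_of_sub_coe_eq_coe_mul {a b : EReal} {u lam : ℝ} (ha : a ≠ ⊥) (hb : b < 0)
    (hlam : 0 < lam) (h : a - u = lam * b) : ∃ φ : ℝ, b = φ ∧ a = ((u + lam * φ : ℝ) : EReal) := by
  have hneg : (lam : EReal) * b < 0 := EReal.mul_neg_iff.2 (.inl ⟨EReal.coe_pos.2 hlam, hb⟩)
  induction a using EReal.rec with
  | bot => exact absurd rfl ha
  | top => simp only [EReal.top_sub_coe] at h; exact absurd (h ▸ hneg) (by simp)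
  | coe v =>
    induction b using EReal.rec with
    | bot => simp [EReal.coe_mul_bot_of_pos hlam, ← EReal.coe_sub] at h
    | top => exact absurd hb (by simp)
    | coe φ =>
      refine ⟨φ, rfl, ?_⟩
      rw [← EReal.coe_sub, ← EReal.coe_mul, EReal.coe_eq_coe_iff] at h
      rw [EReal.coe_eq_coe_iff]; linarith

lemma exists_pos_forall_coe_add_le {ι : Type*} (s : Finset ι) {g : ι → EReal} {φ : ℝ}
    (h : ∀ j ∈ s, (φ : EReal) < g j) : ∃ δ > 0, ∀ j ∈ s, ((φ + δ : ℝ) : EReal) ≤ g j := by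
  obtain ⟨r, hφr, hr⟩ :=
    EReal.lt_iff_exists_real_btwn.1 ((Finset.lt_inf_iff (EReal.coe_lt_top φ)).2 h)
  refine ⟨r - φ, sub_pos.2 (EReal.coe_lt_coe_iff.1 hφr), fun j hj => ?_⟩
  rw [add_sub_cancel]
  exact hr.le.trans (Finset.inf_le hj)

theorem statement18_general {n : ℕ} (f : (Fin n → ℝ) → EReal)
    (hbot : NoBotR f) (hM : PolyMConvex f) (hbdd : BddDomR f)
    (y : Fin n → ℝ) (hy : f y ≠ ⊤) (hphi : phiRp f y < 0)
    (i : Fin n) (hi : ∀ j : Fin n, j ≠ i → phiRp f y < slopeR f y i j)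
    (h k : Fin n) (hhk : h ≠ k) (hd : slopeR f y h k = phiRp f y)
    (lam : ℝ) (hlam : 0 < lam)
    (hstep : f (y + lam • (chiR h - chiR k)) - f y = (lam : EReal) * phiRp f y) :
    ∀ j : Fin n, j ≠ i → phiRp f y < slopeR f (y + lam • (chiR h - chiR k)) i j := by
  obtain ⟨hpoly, hexc⟩ := hM
  obtain ⟨u, hfy⟩ : ∃ u : ℝ, f y = u := ⟨_, (EReal.coe_toReal hy (hbot y)).symm⟩
  rw [hfy] at hstep
  obtain ⟨φ, hφ, hfŷ⟩ := exists_coe_of_sub_coe_eq_coe_mul (hbot _) hphi hlam hstep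
  have hφy : ∀ p q, (φ : EReal) ≤ slopeR f y p q := fun p q =>
    hφ ▸ (iInf_le _ p).trans (iInf_le _ q)
  rw [hφ] at hphi hi hd ⊢
  have hφ0 : φ < 0 := EReal.coe_lt_coe_iff.1 hphi
  have hih : i ≠ h := by
    rintro rfl
    exact (hi k hhk.symm).ne hd.symm
  obtain ⟨δ, hδ0, hδ⟩ := exists_pos_forall_coe_add_le (univ.erase i) (g := slopeR f y i)
    fun j hj => hi j (mem_erase.1 hj).1
  have hminor := coe_add_minorant_le hpoly.lowerSemicontinuous hbdd hbot hexc hfy hφy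
    (fun j hj => hδ j (mem_erase.2 ⟨hj, mem_univ _⟩)) hδ0.le
  intro j hj
  refine (EReal.coe_lt_coe_iff.2 (lt_min (by linarith) hφ0)).trans_le
    (coe_le_slopeR_of_forall_le (m := min (φ + δ) 0) hpoly.convex_epigraph hfŷ hlam
      fun ε hε hεlam => le_trans ?_ (hminor _))
  have hx : y + lam • (chiR h - chiR k) + ε • (chiR i - chiR j) - y
      = lam • (chiR h - chiR k) + ε • (chiR i - chiR j) := by abel
  have := le_minorant_add_smul (δ := δ) (k := k) hih hj hε hεlam hφ0.le hδ0.le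
  rw [hx]
  exact_mod_cast (by linarith)

/-- If `f'_ℝ(y; i, j) > φ_ℝ(y)` for every `j ≠ i`, and `ŷ = y + λ(χ_h - χ_k)` is obtained
by a long step of length `λ > 0` in a steepest descent direction `+χ_h - χ_k`
(so `f(ŷ) - f(y) = λ φ_ℝ(y)`), then `f'_ℝ(ŷ; i, j) > φ_ℝ(y)` for every `j ≠ i`. -/
theorem statement18 {n : ℕ} (hn : 1 ≤ n) (f : (Fin n → ℝ) → EReal)
    (hbot : NoBotR f) (hM : PolyMConvex f) (hbdd : BddDomR f)
    (y : Fin n → ℝ) (hy : f y ≠ ⊤) (hphi : phiRp f y < 0)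
    (i : Fin n) (hi : ∀ j : Fin n, j ≠ i → phiRp f y < slopeR f y i j)
    (h k : Fin n) (hhk : h ≠ k) (hd : slopeR f y h k = phiRp f y)
    (lam : ℝ) (hlam : 0 < lam)
    (hstep : f (y + lam • (chiR h - chiR k)) - f y = (lam : EReal) * phiRp f y) :
    ∀ j : Fin n, j ≠ i → phiRp f y < slopeR f (y + lam • (chiR h - chiR k)) i j :=
  statement18_general f hbot hM hbdd y hy hphi i hi h k hhk hd lam hlam hstep
end
end

section
/- Let f : ℤ^n → ℝ ∪ {+∞} be an M-convex function with bounded dom f (so argmin f ≠ ∅), and define τ(y) = min{‖z − y‖₁ : z ∈ argmin f} for y ∈ dom f. Let x ∈ dom f with φ(x) < 0, and suppose i, j ∈ N minimize f'(x; i, j) over all pairs (i, j) ∈ N × N. Then τ(x + χ_i − χ_j) = τ(x) − 2; consequently, starting from x_0 ∈ dom f, the steepest descent algorithm that repeatedly replaces x by x + χ_i − χ_j for a steepest descent direction reaches a minimizer x* with ‖x* − x_0‖₁ = τ(x_0) after exactly (1/2)τ(x_0) iterations. -/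
noncomputable section

open scoped BigOperators

/-- The `i`-th unit vector in `ℤ^n`. -/
def chi {n : ℕ} (i : Fin n) : Fin n → ℤ := fun k => if k = i then 1 else 0

/-- The function never takes the value `-∞`, i.e. its codomain is `ℝ ∪ {+∞}`. -/
def NoBot {n : ℕ} (f : (Fin n → ℤ) → EReal) : Prop := ∀ x, f x ≠ ⊥

/-- M-convexity: nonempty effective domain together with the exchange axiom (M-EXC). -/
def MConvexFn {n : ℕ} (f : (Fin n → ℤ) → EReal) : Prop :=
  (∃ x, f x ≠ ⊤) ∧
  ∀ x y : Fin n → ℤ, f x ≠ ⊤ → f y ≠ ⊤ →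
    ∀ i : Fin n, y i < x i →
      ∃ j : Fin n, x j < y j ∧
        f (x - chi i + chi j) + f (y + chi i - chi j) ≤ f x + f y

/-- The slopeZ `f'(x; i, j) = f(x + χ_i - χ_j) - f(x)`. -/
def slopeZ {n : ℕ} (f : (Fin n → ℤ) → EReal) (x : Fin n → ℤ) (i j : Fin n) : EReal :=
  f (x + chi i - chi j) - f x

/-- `φ(x) = min_{i, j ∈ N} f'(x; i, j)`. -/
def phi {n : ℕ} (f : (Fin n → ℤ) → EReal) (x : Fin n → ℤ) : EReal :=
  ⨅ i : Fin n, ⨅ j : Fin n, slopeZ f x i j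

/-- Bounded effective domain. -/
def BddDom {n : ℕ} (f : (Fin n → ℤ) → EReal) : Prop :=
  ∃ C : ℤ, ∀ x : Fin n → ℤ, f x ≠ ⊤ → ∀ i, |x i| ≤ C

/-- `‖x‖₁`. -/
def norm1 {n : ℕ} (x : Fin n → ℤ) : ℤ := ∑ i, |x i|

/-- `z` is a global minimizer of `f`. -/
def IsArgmin {n : ℕ} (f : (Fin n → ℤ) → EReal) (z : Fin n → ℤ) : Prop :=
  f z ≠ ⊤ ∧ ∀ y : Fin n → ℤ, f z ≤ f y

/-- `τ(y) = min { ‖z - y‖₁ : z ∈ argmin f }`. -/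
def tau {n : ℕ} (f : (Fin n → ℤ) → EReal) (y : Fin n → ℤ) : ℤ :=
  sInf {d : ℤ | ∃ z : Fin n → ℤ, IsArgmin f z ∧ norm1 (z - y) = d}

/-!
Write `x' = x + χ_i - χ_j`. Since `‖x' - x‖₁ = 2`, only `τ(x') ≤ τ(x) - 2` needs work, and it
follows once some minimizer `z` nearest to `x` has `z(i) > x(i)` and `z(j) < x(j)`. Take a nearest
minimizer maximizing `z(i) - z(j)`. If it were not aligned this way, the exchange axiom applied to
`z` and `x'` (at `j` if `z(j) ≥ x(j)`, at `i` otherwise) produces a point `z + χ_k - χ_j` or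
`z + χ_i - χ_k`, no farther from `x` and with larger `z(i) - z(j)`, together with a partner
`x + χ_i - χ_k` or `x + χ_k - χ_j` that is no better than `x'` because `(i, j)` is steepest;
so the new point is again a minimizer, contradicting maximality.

For the algorithm: `φ(x) ≥ 0` already forces `x ∈ argmin f` (exchanging a nearest minimizer with
`x` would give a strictly nearer one), so `τ` drops by exactly 2 per step until it reaches 0,
while `‖x_m - x_0‖₁` grows by at most 2 per step.
-/

namespace EReal

lemma le_of_add_le_add_of_le_left {a b c d : EReal} (ha : a ≠ ⊥) (hb : b ≠ ⊥) (hc : c ≠ ⊤)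
    (hd : d ≠ ⊤) (h : a + b ≤ c + d) (hca : c ≤ a) : b ≤ d := by
  have hc' : c ≠ ⊥ := fun hc' => by
    rw [hc', bot_add, le_bot_iff, add_eq_bot_iff] at h
    exact h.elim ha hb
  have hd' : d ≠ ⊥ := fun hd' => by
    rw [hd', add_bot, le_bot_iff, add_eq_bot_iff] at h
    exact h.elim ha hb
  lift c to ℝ using ⟨hc, hc'⟩
  lift d to ℝ using ⟨hd, hd'⟩
  have ha' : a ≠ ⊤ := fun ha' => by
    rw [ha', top_add_of_ne_bot hb, top_le_iff] at h
    exact coe_ne_top _ h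
  have hb' : b ≠ ⊤ := fun hb' => by
    rw [hb', add_top_of_ne_bot ha, top_le_iff] at h
    exact coe_ne_top _ h
  lift a to ℝ using ⟨ha', ha⟩
  lift b to ℝ using ⟨hb', hb⟩
  norm_cast at h hca ⊢
  linarith

lemma le_of_add_le_add_of_le_right {a b c d : EReal} (ha : a ≠ ⊥) (hb : b ≠ ⊥) (hc : c ≠ ⊤)
    (hd : d ≠ ⊤) (h : a + b ≤ c + d) (hdb : d ≤ b) : a ≤ c :=
  le_of_add_le_add_of_le_left hb ha hd hc (by rwa [add_comm b, add_comm d]) hdb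

lemma sub_le_sub_iff_right_of_ne {a b c : EReal} (hc : c ≠ ⊤) (hc' : c ≠ ⊥) :
    a - c ≤ b - c ↔ a ≤ b := by
  lift c to ℝ using ⟨hc, hc'⟩
  cases a <;> cases b <;> simp [← EReal.coe_sub]

end EReal

section

variable {n : ℕ}

lemma norm1_nonneg (u : Fin n → ℤ) : 0 ≤ norm1 u :=
  Finset.sum_nonneg fun _ _ => abs_nonneg _

lemma norm1_eq_zero {u : Fin n → ℤ} : norm1 u = 0 ↔ u = 0 := by
  simp [norm1, Finset.sum_eq_zero_iff_of_nonneg, funext_iff]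

lemma norm1_add_chi_sub_chi (u : Fin n → ℤ) {a b : Fin n} (hab : a ≠ b) :
    norm1 (u + chi a - chi b) = norm1 u + (|u a + 1| - |u a|) + (|u b - 1| - |u b|) := by
  have h : ∑ c, (|(u + chi a - chi b) c| - |u c|) = (|u a + 1| - |u a|) + (|u b - 1| - |u b|) := by
    rw [Fintype.sum_eq_add a b hab fun c hc => by simp [chi, hc.1, hc.2]]
    simp [chi, hab, hab.symm]
  rw [Finset.sum_sub_distrib] at h
  unfold norm1
  linarith

lemma norm1_add_chi_sub_chi_le_add_two (u : Fin n → ℤ) (a b : Fin n) :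
    norm1 (u + chi a - chi b) ≤ norm1 u + 2 := by
  rcases eq_or_ne a b with rfl | hab
  · simp
  · rw [norm1_add_chi_sub_chi u hab]
    linarith [abs_add_le (u a) 1, abs_sub (u b) 1, abs_one (α := ℤ)]

lemma norm1_add_chi_sub_chi_le (u : Fin n → ℤ) {a b : Fin n} (h : u a < 0 ∨ 0 < u b) :
    norm1 (u + chi a - chi b) ≤ norm1 u := by
  rcases eq_or_ne a b with rfl | hab
  · simp
  · rw [norm1_add_chi_sub_chi u hab]
    rcases h with h | h
    · rw [abs_of_neg h, abs_of_nonpos (by omega : u a + 1 ≤ 0)]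
      linarith [abs_sub (u b) 1, abs_one (α := ℤ)]
    · rw [abs_of_pos h, abs_of_nonneg (by omega : 0 ≤ u b - 1)]
      linarith [abs_add_le (u a) 1, abs_one (α := ℤ)]

lemma norm1_add_chi_sub_chi_of_neg_of_pos (u : Fin n → ℤ) {a b : Fin n} (ha : u a < 0)
    (hb : 0 < u b) : norm1 (u + chi a - chi b) = norm1 u - 2 := by
  rw [norm1_add_chi_sub_chi u (by rintro rfl; omega), abs_of_neg ha, abs_of_pos hb,
    abs_of_nonpos (by omega : u a + 1 ≤ 0), abs_of_nonneg (by omega : 0 ≤ u b - 1)]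
  ring

variable {f : (Fin n → ℤ) → EReal}

lemma IsArgmin.of_le {z w : Fin n → ℤ} (hz : IsArgmin f z) (h : f w ≤ f z) : IsArgmin f w :=
  ⟨ne_top_of_le_ne_top hz.1 h, fun y => h.trans (hz.2 y)⟩

lemma exists_isArgmin (hne : ∃ x, f x ≠ ⊤) (hbdd : BddDom f) : ∃ z, IsArgmin f z := by
  obtain ⟨C, hC⟩ := hbdd
  have hfin : {v | f v ≠ ⊤}.Finite := (Set.finite_Icc (fun _ => -C) (fun _ => C)).subset
    fun v hv => ⟨fun c => (abs_le.mp (hC v hv c)).1, fun c => (abs_le.mp (hC v hv c)).2⟩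
  obtain ⟨z, hz, hmin⟩ := Set.exists_min_image _ f hfin hne
  exact ⟨z, hz, fun y => (eq_or_ne (f y) ⊤).elim (fun hy => hy ▸ le_top) (hmin y)⟩

lemma tau_le {z : Fin n → ℤ} (hz : IsArgmin f z) (y : Fin n → ℤ) : tau f y ≤ norm1 (z - y) := by
  unfold tau
  exact csInf_le ⟨0, by rintro _ ⟨_, _, rfl⟩; exact norm1_nonneg _⟩ ⟨z, hz, rfl⟩

lemma le_tau (hne : ∃ z, IsArgmin f z) {y : Fin n → ℤ} {m : ℤ}
    (h : ∀ z, IsArgmin f z → m ≤ norm1 (z - y)) : m ≤ tau f y := by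
  unfold tau
  obtain ⟨z, hz⟩ := hne
  exact le_csInf ⟨_, z, hz, rfl⟩ (by rintro _ ⟨z, hz, rfl⟩; exact h z hz)

lemma exists_norm1_sub_eq_tau (hne : ∃ z, IsArgmin f z) (y : Fin n → ℤ) :
    ∃ z, IsArgmin f z ∧ norm1 (z - y) = tau f y := by
  obtain ⟨z, hz⟩ := hne
  exact Int.csInf_mem (s := {d | ∃ z, IsArgmin f z ∧ norm1 (z - y) = d}) ⟨_, z, hz, rfl⟩
    ⟨0, by rintro _ ⟨_, _, rfl⟩; exact norm1_nonneg _⟩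

lemma isArgmin_of_tau_eq_zero (hne : ∃ z, IsArgmin f z) {y : Fin n → ℤ} (h : tau f y = 0) :
    IsArgmin f y := by
  obtain ⟨z, hz, hzy⟩ := exists_norm1_sub_eq_tau hne y
  rwa [← sub_eq_zero.mp (norm1_eq_zero.mp (hzy.trans h))]

lemma slopeZ_le_slopeZ_iff (hbot : NoBot f) {x : Fin n → ℤ} (hx : f x ≠ ⊤) {i j a b : Fin n} :
    slopeZ f x i j ≤ slopeZ f x a b ↔ f (x + chi i - chi j) ≤ f (x + chi a - chi b) :=
  EReal.sub_le_sub_iff_right_of_ne hx (hbot x)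

lemma slopeZ_neg_iff (hbot : NoBot f) {x : Fin n → ℤ} (hx : f x ≠ ⊤) {i j : Fin n} :
    slopeZ f x i j < 0 ↔ f (x + chi i - chi j) < f x :=
  EReal.sub_neg (Or.inr hx) (Or.inr (hbot x))

lemma slopeZ_nonneg_iff (hbot : NoBot f) {x : Fin n → ℤ} (hx : f x ≠ ⊤) {i j : Fin n} :
    0 ≤ slopeZ f x i j ↔ f x ≤ f (x + chi i - chi j) :=
  EReal.sub_nonneg (Or.inr hx) (Or.inr (hbot x))

lemma slopeZ_le_phi {x : Fin n → ℤ} {i j : Fin n}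
    (h : ∀ a b, slopeZ f x i j ≤ slopeZ f x a b) : slopeZ f x i j ≤ phi f x :=
  le_iInf fun a => le_iInf fun b => h a b

lemma phi_le_slopeZ (x : Fin n → ℤ) (a b : Fin n) : phi f x ≤ slopeZ f x a b :=
  (iInf_le _ a).trans (iInf_le _ b)

lemma MConvexFn.exists_lt_of_ne (hM : MConvexFn f) {u v : Fin n → ℤ} (hu : f u ≠ ⊤)
    (hv : f v ≠ ⊤) (huv : u ≠ v) : ∃ c, u c < v c := by
  by_contra! hle
  obtain ⟨c, hc⟩ := Function.ne_iff.mp huv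
  obtain ⟨k, hk, -⟩ := hM.2 u v hu hv c (lt_of_le_of_ne (hle c) hc.symm)
  exact (hle k).not_gt hk

lemma isArgmin_of_forall_le_add_chi_sub_chi (hbot : NoBot f) (hM : MConvexFn f)
    (hbdd : BddDom f) {x : Fin n → ℤ} (hx : f x ≠ ⊤)
    (hloc : ∀ a b, f x ≤ f (x + chi a - chi b)) : IsArgmin f x := by
  have hne := exists_isArgmin hM.1 hbdd
  obtain ⟨z, hz, hzx⟩ := exists_norm1_sub_eq_tau hne x
  rcases eq_or_ne z x with rfl | hne_zx
  · exact hz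
  obtain ⟨c, hc⟩ := hM.exists_lt_of_ne hx hz.1 hne_zx.symm
  obtain ⟨k, hk, hle⟩ := hM.2 z x hz.1 hx c hc
  have hw : IsArgmin f (z - chi c + chi k) :=
    hz.of_le (EReal.le_of_add_le_add_of_le_right (hbot _) (hbot _) hz.1 hx hle (hloc c k))
  have hdist : norm1 (z - chi c + chi k - x) = norm1 (z - x) - 2 := by
    rw [show z - chi c + chi k - x = z - x + chi k - chi c by abel]
    exact norm1_add_chi_sub_chi_of_neg_of_pos _ (by simpa using hk) (by simpa using hc)
  have := tau_le hw x
  omega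

section SteepestDescent

variable {x : Fin n → ℤ} {i j : Fin n}

lemma exists_better_aligned_isArgmin (hbot : NoBot f) (hM : MConvexFn f)
    (hdesc : f (x + chi i - chi j) < f x)
    (hsteep : ∀ a b, f (x + chi i - chi j) ≤ f (x + chi a - chi b))
    {z : Fin n → ℤ} (hz : IsArgmin f z) (hz_not : ¬(x i < z i ∧ z j < x j)) :
    ∃ w, IsArgmin f w ∧ norm1 (w - x) ≤ norm1 (z - x) ∧ z i - z j < w i - w j := by
  have hij : i ≠ j := by rintro rfl; simp at hdesc
  have hx' : f (x + chi i - chi j) ≠ ⊤ := hdesc.ne_top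
  by_cases hzj : x j ≤ z j
  · obtain ⟨k, hk, hle⟩ := hM.2 z _ hz.1 hx' j (by simp [chi, hij.symm]; omega)
    have hki : k ≠ i := by
      rintro rfl
      rw [show x + chi k - chi j + chi j - chi k = x by abel] at hle
      have := EReal.le_of_add_le_add_of_le_left (hbot _) (hbot _) hz.1 hx' hle (hz.2 _)
      exact this.not_gt hdesc
    have hkj : k ≠ j := by rintro rfl; simp [chi, hij.symm] at hk; omega
    rw [show x + chi i - chi j + chi j - chi k = x + chi i - chi k by abel] at hle
    refine ⟨z - chi j + chi k, hz.of_le (EReal.le_of_add_le_add_of_le_right (hbot _) (hbot _)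
      hz.1 hx' hle (hsteep i k)), ?_, by simp [chi, hij, hki.symm, hkj.symm]⟩
    rw [show z - chi j + chi k - x = z - x + chi k - chi j by abel]
    exact norm1_add_chi_sub_chi_le _ (Or.inl (by simpa [chi, hki, hkj] using hk))
  · have hzi : z i ≤ x i := by omega
    obtain ⟨k, hk, hle⟩ := hM.2 _ z hx' hz.1 i (by simp [chi, hij]; omega)
    have hki : k ≠ i := by rintro rfl; simp [chi, hij] at hk; omega
    have hkj : k ≠ j := by rintro rfl; simp [chi, hij.symm] at hk; omega
    rw [show x + chi i - chi j - chi i + chi k = x + chi k - chi j by abel] at hle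
    refine ⟨z + chi i - chi k, hz.of_le (EReal.le_of_add_le_add_of_le_left (hbot _) (hbot _)
      hx' hz.1 hle (hsteep k j)), ?_, by simp [chi, hij.symm, hki.symm, hkj.symm]⟩
    rw [show z + chi i - chi k - x = z - x + chi i - chi k by abel]
    exact norm1_add_chi_sub_chi_le _ (Or.inr (by simpa [chi, hki, hkj] using hk))

lemma exists_nearest_isArgmin_aligned (hbot : NoBot f) (hM : MConvexFn f) (hbdd : BddDom f)
    (hdesc : f (x + chi i - chi j) < f x)
    (hsteep : ∀ a b, f (x + chi i - chi j) ≤ f (x + chi a - chi b)) :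
    ∃ z, IsArgmin f z ∧ norm1 (z - x) = tau f x ∧ x i < z i ∧ z j < x j := by
  have hne := exists_isArgmin hM.1 hbdd
  obtain ⟨C, hC⟩ := hbdd
  obtain ⟨d, ⟨z, hz, hzx, rfl⟩, hmax⟩ := Int.exists_greatest_of_bdd
    (P := fun d => ∃ z, IsArgmin f z ∧ norm1 (z - x) = tau f x ∧ z i - z j = d)
    ⟨2 * C, by
      rintro _ ⟨z, hz, -, rfl⟩
      linarith [abs_le.mp (hC z hz.1 i), abs_le.mp (hC z hz.1 j)]⟩
    (by obtain ⟨z, hz, hzx⟩ := exists_norm1_sub_eq_tau hne x; exact ⟨_, z, hz, hzx, rfl⟩)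
  refine ⟨z, hz, hzx, not_not.mp fun hz_not => ?_⟩
  obtain ⟨w, hw, hwx, hlt⟩ := exists_better_aligned_isArgmin hbot hM hdesc hsteep hz hz_not
  have := hmax _ ⟨w, hw, le_antisymm (hzx ▸ hwx) (tau_le hw x), rfl⟩
  omega

theorem tau_add_chi_sub_chi (hbot : NoBot f) (hM : MConvexFn f) (hbdd : BddDom f)
    (hdesc : f (x + chi i - chi j) < f x)
    (hsteep : ∀ a b, f (x + chi i - chi j) ≤ f (x + chi a - chi b)) :
    tau f (x + chi i - chi j) = tau f x - 2 := by
  apply le_antisymm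
  · obtain ⟨z, hz, hzx, hi, hj⟩ := exists_nearest_isArgmin_aligned hbot hM hbdd hdesc hsteep
    have := tau_le hz (x + chi i - chi j)
    rw [show z - (x + chi i - chi j) = z - x + chi j - chi i by abel,
      norm1_add_chi_sub_chi_of_neg_of_pos _ (by simpa using hj) (by simpa using hi)] at this
    omega
  · refine le_tau (exists_isArgmin hM.1 hbdd) fun z hz => ?_
    have := norm1_add_chi_sub_chi_le_add_two (z - (x + chi i - chi j)) i j
    rw [show z - (x + chi i - chi j) + chi i - chi j = z - x by abel] at this
    linarith [tau_le hz x]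

end SteepestDescent

lemma tau_add_chi_sub_chi_of_steepest (hbot : NoBot f) (hM : MConvexFn f) (hbdd : BddDom f)
    {x : Fin n → ℤ} (hx : f x ≠ ⊤) (hphi : phi f x < 0) {i j : Fin n}
    (hsteep : ∀ a b, slopeZ f x i j ≤ slopeZ f x a b) :
    f (x + chi i - chi j) < f x ∧ tau f (x + chi i - chi j) = tau f x - 2 := by
  have hdesc := (slopeZ_neg_iff hbot hx).mp ((slopeZ_le_phi hsteep).trans_lt hphi)
  exact ⟨hdesc, tau_add_chi_sub_chi hbot hM hbdd hdesc
    fun a b => (slopeZ_le_slopeZ_iff hbot hx).mp (hsteep a b)⟩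

lemma phi_neg_of_tau_pos (hbot : NoBot f) (hM : MConvexFn f) (hbdd : BddDom f)
    {x : Fin n → ℤ} (hx : f x ≠ ⊤) (hτ : 0 < tau f x) : phi f x < 0 := by
  by_contra! hphi
  have hx_min := isArgmin_of_forall_le_add_chi_sub_chi hbot hM hbdd hx
    fun a b => (slopeZ_nonneg_iff hbot hx).mp (hphi.trans (phi_le_slopeZ x a b))
  have := tau_le hx_min x
  rw [sub_self, norm1_eq_zero.mpr rfl] at this
  omega

lemma steepestDescent_tau (hbot : NoBot f) (hM : MConvexFn f) (hbdd : BddDom f)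
    {seq : ℕ → Fin n → ℤ} (h0 : f (seq 0) ≠ ⊤)
    (hstep : ∀ m, phi f (seq m) < 0 → ∃ i j,
      (∀ a b, slopeZ f (seq m) i j ≤ slopeZ f (seq m) a b) ∧ seq (m + 1) = seq m + chi i - chi j)
    {m : ℕ} (hm : 2 * (m : ℤ) ≤ tau f (seq 0)) :
    f (seq m) ≠ ⊤ ∧ tau f (seq m) = tau f (seq 0) - 2 * m ∧ norm1 (seq m - seq 0) ≤ 2 * m := by
  induction m with
  | zero => simp [h0, norm1]
  | succ m ih =>
    obtain ⟨hdom, hτ, hdist⟩ := ih (by omega)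
    have hphi := phi_neg_of_tau_pos hbot hM hbdd hdom (by omega)
    obtain ⟨i, j, hsteep, hnext⟩ := hstep m hphi
    obtain ⟨hdesc, hτ'⟩ := tau_add_chi_sub_chi_of_steepest hbot hM hbdd hdom hphi hsteep
    have := norm1_add_chi_sub_chi_le_add_two (seq m - seq 0) i j
    rw [show seq m - seq 0 + chi i - chi j = seq m + chi i - chi j - seq 0 by abel] at this
    rw [hnext]
    exact ⟨hdesc.ne_top, by rw [hτ', hτ]; push_cast; ring, by push_cast; omega⟩

end

theorem statement19_general {n : ℕ} (f : (Fin n → ℤ) → EReal)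
    (hbot : NoBot f) (hM : MConvexFn f) (hbdd : BddDom f) :
    (∀ x : Fin n → ℤ, f x ≠ ⊤ → phi f x < 0 →
      ∀ i j : Fin n, (∀ i' j' : Fin n, slopeZ f x i j ≤ slopeZ f x i' j') →
        tau f (x + chi i - chi j) = tau f x - 2) ∧
    (∀ x0 : Fin n → ℤ, f x0 ≠ ⊤ →
      ∀ seq : ℕ → (Fin n → ℤ), seq 0 = x0 →
      (∀ m : ℕ,
        (phi f (seq m) < 0 →
          ∃ i j : Fin n,
            (∀ i' j' : Fin n, slopeZ f (seq m) i j ≤ slopeZ f (seq m) i' j') ∧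
            seq (m + 1) = seq m + chi i - chi j) ∧
        (phi f (seq m) = 0 → seq (m + 1) = seq m)) →
      ∀ T : ℕ, 2 * (T : ℤ) = tau f x0 →
        IsArgmin f (seq T) ∧ norm1 (seq T - x0) = tau f x0 ∧
        ∀ m : ℕ, m < T → phi f (seq m) < 0) := by
  refine ⟨fun x hx hphi i j hsteep =>
    (tau_add_chi_sub_chi_of_steepest hbot hM hbdd hx hphi hsteep).2, ?_⟩
  rintro _ hx0 seq rfl hstep T hT
  have hrun := fun (m : ℕ) (hm : 2 * (m : ℤ) ≤ tau f (seq 0)) =>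
    steepestDescent_tau hbot hM hbdd hx0 (fun m => (hstep m).1) hm
  obtain ⟨-, hτT, hdistT⟩ := hrun T hT.le
  have hT_min : IsArgmin f (seq T) :=
    isArgmin_of_tau_eq_zero (exists_isArgmin hM.1 hbdd) (by omega)
  refine ⟨hT_min, le_antisymm (by omega) (tau_le hT_min _), fun m hm => ?_⟩
  obtain ⟨hdom, hτ, -⟩ := hrun m (by omega)
  exact phi_neg_of_tau_pos hbot hM hbdd hdom (by omega)

/-- One steepest descent step decreases the `ℓ₁`-distance to `argmin f` by exactly 2;
consequently, the steepest descent algorithm started at `x₀` reaches a minimizer `x*`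
with `‖x* - x₀‖₁ = τ(x₀)` after exactly `(1/2) τ(x₀)` iterations. -/
theorem statement19 {n : ℕ} (hn : 1 ≤ n) (f : (Fin n → ℤ) → EReal)
    (hbot : NoBot f) (hM : MConvexFn f) (hbdd : BddDom f) :
    (∀ x : Fin n → ℤ, f x ≠ ⊤ → phi f x < 0 →
      ∀ i j : Fin n, (∀ i' j' : Fin n, slopeZ f x i j ≤ slopeZ f x i' j') →
        tau f (x + chi i - chi j) = tau f x - 2) ∧
    (∀ x0 : Fin n → ℤ, f x0 ≠ ⊤ →
      ∀ seq : ℕ → (Fin n → ℤ), seq 0 = x0 →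
      (∀ m : ℕ,
        (phi f (seq m) < 0 →
          ∃ i j : Fin n,
            (∀ i' j' : Fin n, slopeZ f (seq m) i j ≤ slopeZ f (seq m) i' j') ∧
            seq (m + 1) = seq m + chi i - chi j) ∧
        (phi f (seq m) = 0 → seq (m + 1) = seq m)) →
      ∀ T : ℕ, 2 * (T : ℤ) = tau f x0 →
        IsArgmin f (seq T) ∧ norm1 (seq T - x0) = tau f x0 ∧
        ∀ m : ℕ, m < T → phi f (seq m) < 0) :=
  statement19_general f hbot hM hbdd
end
end
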